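/- Let B be a commutative ring, δ a finite standard set, ≺ a monomial order, I ⊆ B[x] monic with standard set δ and reduced Gröbner basis f_α = x^α − Σ_{β∈δ, β≺α} a_{α,β} x^β (α ∈ 𝒞(δ)). Fix a linear map ℓ : ℤ^n → ℤ with ℓ(α) > ℓ(β) whenever a_{α,β} ≠ 0 for α ∈ ℬ(δ), β ∈ δ. Let t be an indeterminate and define g̃_α = x^α − Σ_{β∈δ, β≺α} t^{ℓ(α)−ℓ(β)} a_{α,β} x^β ∈ (B[t])[x]. Then for all α ∈ ℬ(δ), the unique element h_α of the ideal (g̃_α : α ∈ 𝒞(δ)) with leading exponent α and non-leading exponents in δ has coefficients b_{α,β} = t^{ℓ(α)−ℓ(β)} a_{α,β}. -/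

import Mathlib

/-- A monomial order on ℕ^n (exponents as finitely supported functions): a total,
transitive, irreflexive order compatible with addition in which 0 is minimal. -/
structure MonOrd (n : ℕ) where
  lt : (Fin n →₀ ℕ) → (Fin n →₀ ℕ) → Prop
  lt_trans : ∀ {a b c}, lt a b → lt b c → lt a c
  lt_irrefl : ∀ a, ¬ lt a a
  lt_total : ∀ a b, lt a b ∨ a = b ∨ lt b a
  add_right : ∀ {a b} (c), lt a b → lt (a + c) (b + c)
  zero_min : ∀ a, a ≠ 0 → lt 0 a

/-- A standard set in ℕ^n: its complement is closed under addition of elements of ℕ^n. -/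
def StdSet {n : ℕ} (δ : Set (Fin n →₀ ℕ)) : Prop :=
  ∀ α ∉ δ, ∀ γ : Fin n →₀ ℕ, α + γ ∉ δ

/-- A corner of δ: an element outside δ all of whose predecessors (when they exist in ℕ^n)
lie in δ. -/
def StdCorner {n : ℕ} (δ : Set (Fin n →₀ ℕ)) (α : Fin n →₀ ℕ) : Prop :=
  α ∉ δ ∧ ∀ (i : Fin n) (β : Fin n →₀ ℕ), β + Finsupp.single i 1 = α → β ∈ δ

/-- The border of δ: elements outside δ of the form β + e_i with β ∈ δ. -/
def StdBorder {n : ℕ} (δ : Set (Fin n →₀ ℕ)) : Set (Fin n →₀ ℕ) :=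
  {α | α ∉ δ ∧ ∃ (i : Fin n), ∃ β ∈ δ, β + Finsupp.single i 1 = α}

/-- `α` is the leading exponent of `g` with respect to the monomial order `mo`. -/
def IsLeadingExp {R : Type*} [CommRing R] {n : ℕ} (mo : MonOrd n)
    (g : MvPolynomial (Fin n) R) (α : Fin n →₀ ℕ) : Prop :=
  g.coeff α ≠ 0 ∧ ∀ β ∈ g.support, β ≠ α → mo.lt β α

/-- `f` (restricted to the corners of δ) is the reduced Gröbner basis of the monic ideal `I`
with standard set δ: the leading exponents of nonzero elements of `I` are exactly the
complement of δ, each `f α` (α a corner) is a monic element of `I` with leading exponent α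
whose non-leading exponents lie in δ (hence are ≺ α), and the `f α` generate `I`. -/
def IsReducedGB {R : Type*} [CommRing R] {n : ℕ} (mo : MonOrd n) (δ : Set (Fin n →₀ ℕ))
    (I : Ideal (MvPolynomial (Fin n) R)) (f : (Fin n →₀ ℕ) → MvPolynomial (Fin n) R) : Prop :=
  (∀ α, (∃ g ∈ I, g ≠ 0 ∧ IsLeadingExp mo g α) ↔ α ∉ δ) ∧
  (∀ α, StdCorner δ α → f α ∈ I ∧ (f α).coeff α = 1 ∧
    ∀ β ∈ (f α).support, β ≠ α → β ∈ δ ∧ mo.lt β α) ∧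
  I = Ideal.span {p | ∃ α, StdCorner δ α ∧ p = f α}

/-!
Give `t` weight `1` and `x ^ β` weight `L β`. The deformed corner relations are homogeneous,
so every weight slice of an element of the deformed ideal `J`, specialised at `t = 1`, lies in
`I`. As `I` contains no nonzero polynomial supported on `δ`, neither does `J`; this is the
uniqueness. For existence, induct along the border with respect to `≺`: the deformed relation of
`μ + e_j` agrees, up to terms supported on `δ`, with `x_j` times that of `μ` plus multiples of the
relations of smaller border points `β + e_j`; both have all their slices in `I`, so they coincide.
-/

open MvPolynomial
open scoped Polynomial

section WeightSlice

variable {σ R : Type*} [CommRing R]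

/-- The coefficient of `t ^ z`, taken to be `0` when `z < 0`. -/
noncomputable def intCoeff (z : ℤ) : R[X] →ₗ[R] R :=
  if 0 ≤ z then Polynomial.lcoeff R z.toNat else 0

lemma intCoeff_natCast (k : ℕ) (p : R[X]) : intCoeff (k : ℤ) p = p.coeff k := by
  simp [intCoeff]

lemma intCoeff_monomial (z : ℤ) (k : ℕ) (b : R) :
    intCoeff z (Polynomial.monomial k b) = if z = k then b else 0 := by
  unfold intCoeff
  split_ifs with hz hk hk <;> simp [Polynomial.coeff_monomial] <;> omega

lemma intCoeff_monomial_mul (z : ℤ) (k : ℕ) (b : R) (p : R[X]) :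
    intCoeff z (Polynomial.monomial k b * p) = b * intCoeff (z - k) p := by
  rw [← Polynomial.C_mul_X_pow_eq_monomial, mul_assoc]
  unfold intCoeff
  split_ifs with hz hzk hzk <;>
    simp [Polynomial.coeff_C_mul, Polynomial.coeff_X_pow_mul'] <;> try omega

variable (L : (σ →₀ ℕ) →+ ℤ)

/-- The part of `p` of weight `w`, where `t` has weight `1` and `x ^ β` has weight `L β`,
specialised at `t = 1`. -/
noncomputable def weightSlice (w : ℤ) : MvPolynomial σ R[X] →ₗ[R] MvPolynomial σ R where
  toFun p := .ofCoeff <| Finsupp.onFinset p.support (fun β => intCoeff (w - L β) (p.coeff β))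
    fun β hβ => by
      contrapose! hβ
      rw [notMem_support_iff.1 hβ, map_zero]
  map_add' p q := by ext β; simp [coeff]
  map_smul' c p := by ext β; simp [coeff]

@[simp] lemma coeff_weightSlice (w : ℤ) (p : MvPolynomial σ R[X]) (β : σ →₀ ℕ) :
    (weightSlice L w p).coeff β = intCoeff (w - L β) (p.coeff β) := rfl

lemma support_weightSlice_subset (w : ℤ) (p : MvPolynomial σ R[X]) :
    (weightSlice L w p).support ⊆ p.support := by
  intro β
  simp only [mem_support_iff, coeff_weightSlice]
  exact mt fun h => by rw [h, map_zero]

lemma eq_zero_of_weightSlice_eq_zero {p : MvPolynomial σ R[X]}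
    (h : ∀ w, weightSlice L w p = 0) : p = 0 := by
  ext β k
  simpa [intCoeff_natCast] using congr(coeff β $(h (k + L β)))

lemma weightSlice_monomial_mul (w : ℤ) (γ : σ →₀ ℕ) (k : ℕ) (b : R) (p : MvPolynomial σ R[X]) :
    weightSlice L w (monomial γ (Polynomial.monomial k b) * p) =
      monomial γ b * weightSlice L (w - k - L γ) p := by
  ext ρ
  rw [coeff_weightSlice, coeff_monomial_mul', coeff_monomial_mul']
  split_ifs with h
  · have hL : L ρ = L (ρ - γ) + L γ := by rw [← map_add, tsub_add_cancel_of_le h]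
    rw [intCoeff_monomial_mul, coeff_weightSlice, hL]
    congr 3
    ring
  · exact map_zero _

def sliceIdeal (I : Ideal (MvPolynomial σ R)) : Ideal (MvPolynomial σ R[X]) where
  carrier := {p | ∀ w, weightSlice L w p ∈ I}
  add_mem' hp hq w := by rw [map_add]; exact add_mem (hp w) (hq w)
  zero_mem' w := by rw [map_zero]; exact zero_mem I
  smul_mem' c p hp := by
    induction c using MvPolynomial.induction_on' with
    | monomial γ q =>
      induction q using Polynomial.induction_on' with
      | add q₁ q₂ h₁ h₂ => intro w; rw [map_add, add_smul, map_add]; exact add_mem (h₁ w) (h₂ w)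
      | monomial k b =>
        intro w
        rw [smul_eq_mul, weightSlice_monomial_mul]
        exact I.mul_mem_left _ (hp _)
    | add c₁ c₂ h₁ h₂ => intro w; rw [add_smul, map_add]; exact add_mem (h₁ w) (h₂ w)

lemma eq_zero_of_mem_sliceIdeal {I : Ideal (MvPolynomial σ R)} {s : Set (σ →₀ ℕ)}
    (hI : ∀ f ∈ I, f ∈ restrictSupport R s → f = 0) {p : MvPolynomial σ R[X]}
    (hp : p ∈ sliceIdeal L I) (hs : p ∈ restrictSupport R[X] s) : p = 0 :=
  eq_zero_of_weightSlice_eq_zero L fun w =>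
    hI _ (hp w) (subset_trans (Finset.coe_subset.2 (support_weightSlice_subset L w p)) hs)

end WeightSlice

section BorderPoly

variable {σ S : Type*} [CommRing S] (δ : Finset (σ →₀ ℕ)) (c : (σ →₀ ℕ) → (σ →₀ ℕ) → S)

noncomputable def borderPoly (α : σ →₀ ℕ) : MvPolynomial σ S :=
  monomial α 1 - ∑ β ∈ δ, monomial β (c α β)

lemma coeff_borderPoly [DecidableEq σ] (α β : σ →₀ ℕ) :
    (borderPoly δ c α).coeff β = (if α = β then 1 else 0) - if β ∈ δ then c α β else 0 := by
  simp [borderPoly, coeff_monomial, coeff_sum]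

lemma monomial_sub_borderPoly_mem (α : σ →₀ ℕ) :
    monomial α 1 - borderPoly δ c α ∈ restrictSupport S ↑δ := by
  rw [borderPoly, sub_sub_cancel]
  exact Submodule.sum_mem _ fun β hβ => (monomial_mem_restrictSupport S).2 (Or.inl hβ)

lemma borderPoly_add_single_sub_mem [DecidableEq σ] (μ : σ →₀ ℕ) (j : σ) :
    monomial (Finsupp.single j 1) 1 * borderPoly δ c μ +
        ∑ β ∈ δ with β + Finsupp.single j 1 ∉ δ,
          C (c μ β) * borderPoly δ c (β + Finsupp.single j 1) -
      borderPoly δ c (μ + Finsupp.single j 1) ∈ restrictSupport S ↑δ := by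
  set e := Finsupp.single j 1
  have hx : monomial e 1 * borderPoly δ c μ =
      monomial (μ + e) 1 - ∑ β ∈ δ with β + e ∈ δ, monomial (β + e) (c μ β) -
        ∑ β ∈ δ with β + e ∉ δ, monomial (β + e) (c μ β) := by
    rw [borderPoly, mul_sub, Finset.mul_sum, sub_sub, Finset.sum_filter_add_sum_filter_not,
      monomial_mul, one_mul, add_comm e]
    congr 1
    exact Finset.sum_congr rfl fun β _ => by rw [monomial_mul, one_mul, add_comm e]
  have hC : ∀ β, C (c μ β) * borderPoly δ c (β + e) =
      monomial (β + e) (c μ β) - c μ β • (monomial (β + e) 1 - borderPoly δ c (β + e)) := by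
    intro β
    rw [C_mul', smul_sub, smul_monomial, smul_eq_mul, mul_one, sub_sub_cancel]
  rw [hx, Finset.sum_congr rfl fun β _ => hC β, Finset.sum_sub_distrib]
  have hD : ∑ β ∈ δ with β + e ∈ δ, monomial (β + e) (c μ β) ∈ restrictSupport S ↑δ :=
    Submodule.sum_mem _ fun β hβ =>
      (monomial_mem_restrictSupport S).2 (Or.inl (Finset.mem_filter.1 hβ).2)
  have hDc : ∑ β ∈ δ with β + e ∉ δ, c μ β • (monomial (β + e) 1 - borderPoly δ c (β + e)) ∈
      restrictSupport S ↑δ :=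
    Submodule.sum_mem _ fun β _ => Submodule.smul_mem _ _ (monomial_sub_borderPoly_mem δ c _)
  convert sub_mem (sub_mem (monomial_sub_borderPoly_mem δ c (μ + e)) hD) hDc using 1
  abel

end BorderPoly

section Deformation

variable {σ R : Type*} [CommRing R] (L : (σ →₀ ℕ) →+ ℤ) (δ : Finset (σ →₀ ℕ))
  (a : (σ →₀ ℕ) → (σ →₀ ℕ) → R)

noncomputable def deformCoeff : (σ →₀ ℕ) → (σ →₀ ℕ) → R[X] :=
  fun α β => Polynomial.monomial (L α - L β).toNat (a α β)

lemma intCoeff_deformCoeff {α β : σ →₀ ℕ} (h : a α β ≠ 0 → L β ≤ L α) (w : ℤ) :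
    intCoeff (w - L β) (deformCoeff L a α β) = if w = L α then a α β else 0 := by
  rw [deformCoeff, intCoeff_monomial]
  by_cases ha : a α β = 0
  · simp [ha]
  · have := h ha
    exact if_congr (by omega) rfl rfl

lemma weightSlice_borderPoly_deformCoeff [DecidableEq σ] {α : σ →₀ ℕ}
    (hα : ∀ β ∈ δ, a α β ≠ 0 → L β ≤ L α) (w : ℤ) :
    weightSlice L w (borderPoly δ (deformCoeff L a) α) =
      if w = L α then borderPoly δ a α else 0 := by
  ext ρ
  have hx : intCoeff (w - L ρ) (if α = ρ then (1 : R[X]) else 0) =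
      if α = ρ then (if w = L α then 1 else 0) else 0 := by
    by_cases h : α = ρ
    · subst h
      rw [if_pos rfl, if_pos rfl, ← Polynomial.monomial_zero_one, intCoeff_monomial, Nat.cast_zero]
      exact if_congr sub_eq_zero rfl rfl
    · simp [h]
  have hδ : intCoeff (w - L ρ) (if ρ ∈ δ then deformCoeff L a α ρ else 0) =
      if ρ ∈ δ then (if w = L α then a α ρ else 0) else 0 := by
    by_cases h : ρ ∈ δ
    · simpa [h] using intCoeff_deformCoeff L a (hα ρ h) w
    · simp [h]
  rw [coeff_weightSlice, coeff_borderPoly, map_sub, hx, hδ]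
  by_cases hw : w = L α <;> simp [coeff_borderPoly, hw]

lemma borderPoly_deformCoeff_mem_sliceIdeal [DecidableEq σ] {I : Ideal (MvPolynomial σ R)}
    {α : σ →₀ ℕ} (hI : borderPoly δ a α ∈ I) (hα : ∀ β ∈ δ, a α β ≠ 0 → L β ≤ L α) :
    borderPoly δ (deformCoeff L a) α ∈ sliceIdeal L I := fun w => by
  rw [weightSlice_borderPoly_deformCoeff L δ a hα]
  split_ifs
  exacts [hI, zero_mem I]

end Deformation

section StandardSet

variable {n : ℕ}

instance MonOrd.isStrictOrder (mo : MonOrd n) : IsStrictOrder (Fin n →₀ ℕ) mo.lt where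
  irrefl := mo.lt_irrefl
  trans _ _ _ := mo.lt_trans

lemma MonOrd.exists_max (mo : MonOrd n) {s : Finset (Fin n →₀ ℕ)} (hs : s.Nonempty) :
    ∃ m ∈ s, ∀ b ∈ s, b ≠ m → mo.lt b m := by
  obtain ⟨⟨m, hm⟩, -, hmax⟩ := (s.finite_toSet.wellFoundedOn (r := Function.swap mo.lt)).has_min
    Set.univ ⟨⟨_, hs.choose_spec⟩, trivial⟩
  refine ⟨m, hm, fun b hb hbm => ?_⟩
  rcases mo.lt_total b m with h | h | h
  exacts [h, absurd h hbm, absurd h (hmax ⟨b, hb⟩ trivial)]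

lemma eq_zero_of_mem_restrictSupport {R : Type*} [CommRing R] (mo : MonOrd n)
    {δ : Set (Fin n →₀ ℕ)} {I : Ideal (MvPolynomial (Fin n) R)}
    (hI : ∀ α, (∃ g ∈ I, g ≠ 0 ∧ IsLeadingExp mo g α) → α ∉ δ)
    {f : MvPolynomial (Fin n) R} (hf : f ∈ I) (hfδ : f ∈ restrictSupport R δ) : f = 0 := by
  by_contra hne
  obtain ⟨m, hm, hmax⟩ := mo.exists_max (support_nonempty.2 hne)
  exact hI m ⟨f, hf, hne, mem_support_iff.1 hm, hmax⟩ (hfδ hm)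

lemma finite_stdBorder (δ : Finset (Fin n →₀ ℕ)) : (StdBorder (δ : Set (Fin n →₀ ℕ))).Finite := by
  refine (Set.finite_iUnion fun i => δ.finite_toSet.image (· + Finsupp.single i 1)).subset ?_
  rintro α ⟨-, i, β, hβ, rfl⟩
  exact Set.mem_iUnion.2 ⟨i, β, hβ, rfl⟩

lemma StdCorner.mem_stdBorder {δ : Set (Fin n →₀ ℕ)} (hδ : StdSet δ) (hne : δ.Nonempty)
    {c : Fin n →₀ ℕ} (hc : StdCorner δ c) : c ∈ StdBorder δ := by
  obtain ⟨β, hβ⟩ := hne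
  have h0 : (0 : Fin n →₀ ℕ) ∈ δ := by
    by_contra h0
    exact hδ 0 h0 β (by rwa [zero_add])
  obtain ⟨i, hi⟩ := Finsupp.ne_iff.1 (ne_of_mem_of_not_mem h0 hc.1).symm
  have hic : c - Finsupp.single i 1 + Finsupp.single i 1 = c :=
    tsub_add_cancel_of_le (Finsupp.single_le_iff.2 (Nat.one_le_iff_ne_zero.2 hi))
  exact ⟨hc.1, i, _, hc.2 i _ hic, hic⟩

lemma exists_add_single_mem_stdBorder (mo : MonOrd n) {δ : Set (Fin n →₀ ℕ)} (hδ : StdSet δ)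
    {α : Fin n →₀ ℕ} (hα : α ∈ StdBorder δ) (hc : ¬ StdCorner δ α) :
    ∃ (j : Fin n) (μ : Fin n →₀ ℕ), μ + Finsupp.single j 1 = α ∧ μ ∈ StdBorder δ ∧ mo.lt μ α := by
  obtain ⟨hαδ, i, β, hβ, rfl⟩ := hα
  obtain ⟨j, μ, hμ, hμδ⟩ : ∃ j μ, μ + Finsupp.single j 1 = β + Finsupp.single i 1 ∧ μ ∉ δ := by
    by_contra! h
    exact hc ⟨hαδ, h⟩
  have hji : j ≠ i := by
    rintro rfl
    exact hμδ (add_right_cancel hμ ▸ hβ)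
  have hjβ : Finsupp.single j 1 ≤ β := by
    have := congr($hμ j)
    simp only [Finsupp.add_apply, Finsupp.single_eq_same, Finsupp.single_eq_of_ne hji] at this
    exact Finsupp.single_le_iff.2 (by omega)
  set β' := β - Finsupp.single j 1
  have hβ' : β' + Finsupp.single j 1 = β := tsub_add_cancel_of_le hjβ
  have hμβ' : μ = β' + Finsupp.single i 1 := by
    apply add_right_cancel (b := Finsupp.single j 1)
    rw [hμ, ← hβ', add_right_comm]
  refine ⟨j, μ, hμ, ⟨hμδ, i, β', ?_, hμβ'.symm⟩, ?_⟩
  · by_contra h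
    exact hδ β' h _ (hβ'.symm ▸ hβ)
  · have := mo.add_right μ (mo.zero_min (Finsupp.single j 1) (Finsupp.single_ne_zero.2 one_ne_zero))
    rwa [zero_add, add_comm, hμ] at this

end StandardSet

lemma sub_mem_restrictSupport_of_coeff_eq {σ S : Type*} [CommRing S] {s : Set (σ →₀ ℕ)}
    {α : σ →₀ ℕ} {p q : MvPolynomial σ S} (hα : p.coeff α = q.coeff α)
    (hp : ∀ β ∈ p.support, β ≠ α → β ∈ s) (hq : ∀ β ∈ q.support, β ≠ α → β ∈ s) :
    p - q ∈ restrictSupport S s := by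
  rw [mem_restrictSupport_iff]
  intro β hβ
  rw [Finset.mem_coe, mem_support_iff, coeff_sub] at hβ
  by_cases hβα : β = α
  · exact absurd (by rw [hβα, hα, sub_self]) hβ
  by_cases hpβ : p.coeff β = 0
  · exact hq β (mem_support_iff.2 fun h => hβ (by rw [hpβ, h, sub_self])) hβα
  · exact hp β (mem_support_iff.2 hpβ) hβα

theorem borderPoly_deformCoeff_mem {n : ℕ} {R : Type*} [CommRing R] (mo : MonOrd n)
    {δ : Finset (Fin n →₀ ℕ)} (hδ : StdSet (δ : Set (Fin n →₀ ℕ)))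
    {a : (Fin n →₀ ℕ) → (Fin n →₀ ℕ) → R} {L : (Fin n →₀ ℕ) →+ ℤ}
    {I : Ideal (MvPolynomial (Fin n) R)} {J : Ideal (MvPolynomial (Fin n) R[X])}
    (hI : ∀ f ∈ I, f ∈ restrictSupport R ↑δ → f = 0) (hJI : J ≤ sliceIdeal L I)
    (hcorner : ∀ c, StdCorner ↑δ c → borderPoly δ (deformCoeff L a) c ∈ J)
    (hborder : ∀ α ∈ StdBorder ↑δ, borderPoly δ a α ∈ I ∧ ∀ β ∈ δ, a α β ≠ 0 → mo.lt β α)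
    (hL : ∀ α ∈ StdBorder ↑δ, ∀ β ∈ δ, a α β ≠ 0 → L β < L α) :
    ∀ α ∈ StdBorder ↑δ, borderPoly δ (deformCoeff L a) α ∈ J := by
  intro α hα
  refine (finite_stdBorder δ).wellFoundedOn.induction (r := mo.lt) hα
    (P := fun α => borderPoly δ (deformCoeff L a) α ∈ J) fun α hα ih => ?_
  by_cases hc : StdCorner ↑δ α
  · exact hcorner α hc
  obtain ⟨j, μ, rfl, hμ, hμα⟩ := exists_add_single_mem_stdBorder mo hδ hα hc
  have hG : monomial (Finsupp.single j 1) 1 * borderPoly δ (deformCoeff L a) μ +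
      ∑ β ∈ δ with β + Finsupp.single j 1 ∉ δ,
        C (deformCoeff L a μ β) * borderPoly δ (deformCoeff L a) (β + Finsupp.single j 1) ∈ J := by
    refine add_mem (J.mul_mem_left _ (ih μ hμ hμα)) (sum_mem fun β hβ => ?_)
    obtain ⟨hβδ, hβj⟩ := Finset.mem_filter.1 hβ
    by_cases h0 : a μ β = 0
    · simp [deformCoeff, h0]
    · exact J.mul_mem_left _
        (ih _ ⟨hβj, j, β, hβδ, rfl⟩ (mo.add_right _ ((hborder μ hμ).2 β hβδ h0)))
  have hα' := borderPoly_deformCoeff_mem_sliceIdeal L δ a (hborder _ hα).1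
    fun β hβ h0 => (hL _ hα β hβ h0).le
  have hdiff := borderPoly_add_single_sub_mem δ (deformCoeff L a) μ j
  rwa [← sub_eq_zero.1 (eq_zero_of_mem_sliceIdeal L hI (sub_mem (hJI hG) hα') hdiff)]

theorem stmt16 {B : Type*} [CommRing B] {n : ℕ} (mo : MonOrd n)
    (δ : Finset (Fin n →₀ ℕ))
    (hstd : ∀ α ∉ δ, ∀ γ : Fin n →₀ ℕ, α + γ ∉ δ)
    (a : (Fin n →₀ ℕ) → (Fin n →₀ ℕ) → B)
    (I : Ideal (MvPolynomial (Fin n) B))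
    (hRGB : IsReducedGB mo (↑δ : Set (Fin n →₀ ℕ)) I
      (fun α => MvPolynomial.monomial α 1 - ∑ β ∈ δ, MvPolynomial.monomial β (a α β)))
    (hborder : ∀ α ∈ StdBorder (↑δ : Set (Fin n →₀ ℕ)),
      (MvPolynomial.monomial α (1 : B) - ∑ β ∈ δ, MvPolynomial.monomial β (a α β)) ∈ I ∧
      ∀ β ∈ δ, a α β ≠ 0 → mo.lt β α)
    (l : (Fin n → ℤ) →ₗ[ℤ] ℤ)
    (L : (Fin n →₀ ℕ) → ℤ) (hL : ∀ v : Fin n →₀ ℕ, L v = l (fun k => (v k : ℤ)))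
    (hl : ∀ α ∈ StdBorder (↑δ : Set (Fin n →₀ ℕ)), ∀ β ∈ δ, a α β ≠ 0 → L β < L α)
    (J : Ideal (MvPolynomial (Fin n) (Polynomial B)))
    (hJ : J = Ideal.span {p | ∃ α, StdCorner (↑δ : Set (Fin n →₀ ℕ)) α ∧
      p = MvPolynomial.monomial α (1 : Polynomial B) -
        ∑ β ∈ δ, MvPolynomial.monomial β (Polynomial.monomial (L α - L β).toNat (a α β))}) :
    ∀ α ∈ StdBorder (↑δ : Set (Fin n →₀ ℕ)),
      ∃ h ∈ J, (h : MvPolynomial (Fin n) (Polynomial B)).coeff α = 1 ∧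
        (∀ β ∈ (h : MvPolynomial (Fin n) (Polynomial B)).support, β ≠ α → β ∈ δ) ∧
        (∀ β ∈ δ, (h : MvPolynomial (Fin n) (Polynomial B)).coeff β =
          Polynomial.monomial (L α - L β).toNat (-(a α β))) ∧
        ∀ h' ∈ J, (h' : MvPolynomial (Fin n) (Polynomial B)).coeff α = 1 →
          (∀ β ∈ (h' : MvPolynomial (Fin n) (Polynomial B)).support, β ≠ α → β ∈ δ) →
          h' = h := by
  intro α hα
  obtain ⟨L, rfl⟩ : ∃ L' : (Fin n →₀ ℕ) →+ ℤ, ⇑L' = L :=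
    ⟨AddMonoidHom.mk' L fun u v => by rw [hL, hL, hL, ← map_add]; rfl, rfl⟩
  have hI : ∀ f ∈ I, f ∈ restrictSupport B ↑δ → f = 0 :=
    fun f => eq_zero_of_mem_restrictSupport mo fun α => (hRGB.1 α).1
  have hJI : J ≤ sliceIdeal L I := by
    rw [hJ, Ideal.span_le]
    rintro _ ⟨c, hc, rfl⟩
    exact borderPoly_deformCoeff_mem_sliceIdeal L δ a (hRGB.2.1 c hc).1
      fun β hβ h0 => (hl c (hc.mem_stdBorder hstd ⟨β, hβ⟩) β hβ h0).le
  have hmem := borderPoly_deformCoeff_mem mo hstd hI hJI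
    (fun c hc => hJ ▸ Ideal.subset_span ⟨c, hc, rfl⟩) hborder hl α hα
  have hαδ : α ∉ δ := hα.1
  have hsupp : ∀ β ∈ (borderPoly δ (deformCoeff L a) α).support, β ≠ α → β ∈ δ := by
    intro β hβ hβα
    by_contra hβδ
    simp [coeff_borderPoly, Ne.symm hβα, hβδ] at hβ
  refine ⟨_, hmem, by simp [coeff_borderPoly, hαδ], hsupp, fun β hβ => ?_,
    fun h' hh' h'α h'δ => ?_⟩
  · simp [coeff_borderPoly, deformCoeff, hβ, (ne_of_mem_of_not_mem hβ hαδ).symm]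
  · refine sub_eq_zero.1 (eq_zero_of_mem_sliceIdeal L hI (sub_mem (hJI hh') (hJI hmem)) ?_)
    exact sub_mem_restrictSupport_of_coeff_eq (by simp [h'α, coeff_borderPoly, hαδ]) h'δ hsupp
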